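/- arXiv:2602.02978 — 2 statements merged into one kernel-verified Lean document; each statement's English description precedes it below -/
import Mathlib

section
/- Let C ⊆ ℝ^n be a nonempty closed convex set with Euclidean projection P, let x* ∈ ℝ^n, and let X be a square-integrable ℝ^n-valued random vector. Then E‖P(X) − x*‖² ≤ E‖X − x*‖² + ‖P(x*) − x*‖². -/
open MeasureTheory RealInnerProductSpace

/-!
Write `d := ‖P x* - x*‖`. For every `y`, the variational inequality
`⟪y - P y, P x* - P y⟫ ≤ 0` turns the identity
`‖y - x*‖² + d² - ‖P y - x*‖² = ‖(y - P y) + (P x* - x*)‖² - 2 ⟪y - P y, P x* - P y⟫`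
into the pointwise bound `‖P y - x*‖² ≤ ‖y - x*‖² + d²`, which is then integrated against the
law of `X`; the right-hand side is integrable because `X` is square-integrable.
-/

section InnerProductSpace

variable {F : Type*} [NormedAddCommGroup F] [InnerProductSpace ℝ F]

theorem real_inner_sub_le_zero_of_forall_norm_sub_le {K : Set F} (hK : Convex ℝ K) {u v : F}
    (hv : v ∈ K) (hmin : ∀ w ∈ K, ‖u - v‖ ≤ ‖u - w‖) : ∀ w ∈ K, ⟪u - v, w - v⟫ ≤ 0 := by
  have : Nonempty K := ⟨⟨v, hv⟩⟩
  rw [← norm_eq_iInf_iff_real_inner_le_zero hK hv]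
  exact le_antisymm (le_ciInf fun w => hmin w w.2)
    (ciInf_le ⟨0, fun _ ⟨_, h⟩ => h ▸ norm_nonneg _⟩ (⟨v, hv⟩ : K))

theorem norm_sub_sq_le_add_of_real_inner_le_zero {y u w : F} (h : ⟪y - u, w - u⟫ ≤ 0) (z : F) :
    ‖u - z‖ ^ 2 ≤ ‖y - z‖ ^ 2 + ‖w - z‖ ^ 2 := by
  have hyz := norm_add_sq_real (y - u) (u - z)
  have hsum := norm_add_sq_real (y - u) (w - z)
  rw [sub_add_sub_cancel] at hyz
  have hwu : w - u = (w - z) - (u - z) := by abel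
  rw [hwu, inner_sub_right] at h
  linarith [sq_nonneg ‖y - u + (w - z)‖]

end InnerProductSpace

theorem projection_bias_bound_general {n : ℕ} {Ω : Type*} [MeasurableSpace Ω]
    (μ : Measure Ω) [IsProbabilityMeasure μ]
    (C : Set (EuclideanSpace ℝ (Fin n)))
    (hconv : Convex ℝ C)
    (P : EuclideanSpace ℝ (Fin n) → EuclideanSpace ℝ (Fin n))
    (hPmem : ∀ x, P x ∈ C)
    (hPmin : ∀ x, ∀ z ∈ C, ‖x - P x‖ ≤ ‖x - z‖)
    (xstar : EuclideanSpace ℝ (Fin n))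
    (X : Ω → EuclideanSpace ℝ (Fin n)) (hX : MemLp X 2 μ) :
    ∫ ω, ‖P (X ω) - xstar‖ ^ 2 ∂μ ≤
      (∫ ω, ‖X ω - xstar‖ ^ 2 ∂μ) + ‖P xstar - xstar‖ ^ 2 := by
  have hpointwise (y : EuclideanSpace ℝ (Fin n)) :
      ‖P y - xstar‖ ^ 2 ≤ ‖y - xstar‖ ^ 2 + ‖P xstar - xstar‖ ^ 2 :=
    norm_sub_sq_le_add_of_real_inner_le_zero
      (real_inner_sub_le_zero_of_forall_norm_sub_le hconv (hPmem y) (hPmin y) _ (hPmem xstar)) _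
  have hint : Integrable (fun ω => ‖X ω - xstar‖ ^ 2) μ :=
    (hX.sub (memLp_const xstar)).norm.integrable_sq
  calc ∫ ω, ‖P (X ω) - xstar‖ ^ 2 ∂μ
      ≤ ∫ ω, (‖X ω - xstar‖ ^ 2 + ‖P xstar - xstar‖ ^ 2) ∂μ :=
        integral_mono_of_nonneg (.of_forall fun _ => by positivity)
          (hint.add (integrable_const _)) (.of_forall fun ω => hpointwise (X ω))
    _ = (∫ ω, ‖X ω - xstar‖ ^ 2 ∂μ) + ‖P xstar - xstar‖ ^ 2 := by
        simp [integral_add hint (integrable_const _)]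

/-- Bias after projection is bounded by structural mismatch:
`E‖P(X) − x*‖² ≤ E‖X − x*‖² + ‖P(x*) − x*‖²`. -/
theorem projection_bias_bound {n : ℕ} {Ω : Type*} [MeasurableSpace Ω]
    (μ : Measure Ω) [IsProbabilityMeasure μ]
    (C : Set (EuclideanSpace ℝ (Fin n))) (hne : C.Nonempty) (hcl : IsClosed C)
    (hconv : Convex ℝ C)
    (P : EuclideanSpace ℝ (Fin n) → EuclideanSpace ℝ (Fin n))
    (hPmem : ∀ x, P x ∈ C)
    (hPmin : ∀ x, ∀ z ∈ C, ‖x - P x‖ ≤ ‖x - z‖)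
    (xstar : EuclideanSpace ℝ (Fin n))
    (X : Ω → EuclideanSpace ℝ (Fin n)) (hX : MemLp X 2 μ) :
    ∫ ω, ‖P (X ω) - xstar‖ ^ 2 ∂μ ≤
      (∫ ω, ‖X ω - xstar‖ ^ 2 ∂μ) + ‖P xstar - xstar‖ ^ 2 :=
  projection_bias_bound_general μ C hconv P hPmem hPmin xstar X hX
end

section
/- Consider a discounted MDP with bounded rewards, discount γ ∈ (0,1), finite action set A, and the optimal Bellman operator (T*Q)(s,a) = r(s,a) + γ·E_{s'∼P(·|s,a)}[max_{a'} Q(s',a')] acting on bounded functions Q : S × A → ℝ with the sup norm. Suppose the MDP is G-invariant under a transformation g = (T_g, Π_g) with T_g : S → S and Π_g a permutation of A, meaning r(T_g s, Π_g a) = r(s,a) and P(·|T_g s, Π_g a) equals the pushforward of P(·|s,a) under T_g. Define the pullback (U_g Q)(s,a) = Q(T_g⁻¹ s, Π_g⁻¹ a) for invertible T_g. Then T* commutes with U_g: T*(U_g Q) = U_g(T* Q) for all bounded Q. -/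
/-- The optimal Bellman operator of a finite discounted MDP:
`(T*Q)(s,a) = r(s,a) + γ · ∑_{s'} P(s'|s,a) · max_{a'} Q(s',a')`. -/
noncomputable def bellmanOpt {S A : Type*} [Fintype S] [Fintype A] [Nonempty A]
    (P : S → A → S → ℝ) (r : S → A → ℝ) (γ : ℝ) (Q : S → A → ℝ) : S → A → ℝ :=
  fun s a => r s a + γ * ∑ s', P s a s' * ⨆ a', Q s' a'

theorem bellmanOpt_pullback_apply_of_invariant {S A : Type*} [Fintype S] [Fintype A] [Nonempty A]
    (P : S → A → S → ℝ) (r : S → A → ℝ) (γ : ℝ) (Tg : S ≃ S) (Pg : A ≃ A)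
    (hr : ∀ s a, r (Tg s) (Pg a) = r s a)
    (hPinv : ∀ s a s', P (Tg s) (Pg a) (Tg s') = P s a s')
    (Q : S → A → ℝ) (s : S) (a : A) :
    bellmanOpt P r γ (fun s a => Q (Tg.symm s) (Pg.symm a)) (Tg s) (Pg a) =
      bellmanOpt P r γ Q s a := by
  have hmax : ∀ s', ⨆ a', Q s' (Pg.symm a') = ⨆ a', Q s' a' := fun s' => Pg.symm.iSup_comp
  have hexp : ∑ s', P (Tg s) (Pg a) s' * ⨆ a', Q (Tg.symm s') (Pg.symm a') =
      ∑ s', P s a s' * ⨆ a', Q s' a' := by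
    rw [← Tg.sum_comp]
    simp only [Equiv.symm_apply_apply, hPinv, hmax]
  simp only [bellmanOpt, hr, hexp]

theorem bellman_commutes_pullback_general {S A : Type*} [Fintype S] [Fintype A] [Nonempty A]
    (P : S → A → S → ℝ) (r : S → A → ℝ) (γ : ℝ) (Tg : S ≃ S) (Pg : A ≃ A)
    (hr : ∀ s a, r (Tg s) (Pg a) = r s a)
    (hPinv : ∀ s a s', P (Tg s) (Pg a) (Tg s') = P s a s')
    (Q : S → A → ℝ) :
    bellmanOpt P r γ (fun s a => Q (Tg.symm s) (Pg.symm a)) =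
      fun s a => bellmanOpt P r γ Q (Tg.symm s) (Pg.symm a) := by
  funext s a
  obtain ⟨s, rfl⟩ := Tg.surjective s
  obtain ⟨a, rfl⟩ := Pg.surjective a
  rw [bellmanOpt_pullback_apply_of_invariant P r γ Tg Pg hr hPinv, Tg.symm_apply_apply,
    Pg.symm_apply_apply]

/-- Commutation of the optimal Bellman operator with the pullback by an MDP
automorphism: if the MDP is invariant under `g = (T_g, Π_g)` (reward invariance and
pushforward invariance of the transition kernel), then `T*(U_g Q) = U_g(T* Q)` for
every `Q`, where `(U_g Q)(s,a) = Q(T_g⁻¹ s, Π_g⁻¹ a)`. -/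
theorem bellman_commutes_pullback {S A : Type*} [Fintype S] [Fintype A] [Nonempty A]
    (P : S → A → S → ℝ) (hP0 : ∀ s a s', 0 ≤ P s a s')
    (hP1 : ∀ s a, ∑ s', P s a s' = 1)
    (r : S → A → ℝ) (Cr : ℝ) (hr_bdd : ∀ s a, |r s a| ≤ Cr)
    (γ : ℝ) (hγ0 : 0 < γ) (hγ1 : γ < 1)
    (Tg : S ≃ S) (Pg : A ≃ A)
    (hr : ∀ s a, r (Tg s) (Pg a) = r s a)
    (hPinv : ∀ s a s', P (Tg s) (Pg a) (Tg s') = P s a s')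
    (Q : S → A → ℝ) :
    bellmanOpt P r γ (fun s a => Q (Tg.symm s) (Pg.symm a)) =
      fun s a => bellmanOpt P r γ Q (Tg.symm s) (Pg.symm a) :=
  bellman_commutes_pullback_general P r γ Tg Pg hr hPinv Q
end
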